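/- arXiv:2605.06019 — 3 statements merged into one kernel-verified Lean document; each statement's English description precedes it below -/
import Mathlib

section
/- Let Φ, Ψ : Mₘ(ℂ) → Mₙ(ℂ) be completely positive maps with Choi matrices C_Φ and C_Ψ. A linear map Θ : Mₘ(ℂ) → Mₙ(ℂ) satisfies that the block map x ↦ [[Φ(x), Θ(x)],[Θ(x), Ψ(x)]] is completely positive if and only if the block matrix [[C_Φ, C_Θ],[C_Θ, C_Ψ]] is positive semidefinite. Consequently, the Choi matrix of the geometric mean Φ # Ψ equals the matrix geometric mean C_Φ # C_Ψ. -/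
open scoped ComplexOrder

/-- A linear map `Φ : M_m(ℂ) → M_n(ℂ)` is completely positive if for every `k`, the
amplification `id_{M_k} ⊗ Φ` maps positive semidefinite matrices to positive
semidefinite matrices. -/
def IsCP {m n : Type*} [Fintype m] [Fintype n]
    (Φ : Matrix m m ℂ →ₗ[ℂ] Matrix n n ℂ) : Prop :=
  ∀ (k : ℕ) (M : Matrix (Fin k × m) (Fin k × m) ℂ), M.PosSemidef →
    (Matrix.of fun p q : Fin k × n =>
      Φ (Matrix.of fun x y => M (p.1, x) (q.1, y)) p.2 q.2).PosSemidef

/-- The Choi matrix `C_Φ = Σ_{i,j} e_{ij} ⊗ Φ(e_{ij})` of a linear map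
`Φ : M_m(ℂ) → M_n(ℂ)`. -/
noncomputable def choi {m n : Type*} [Fintype m] [DecidableEq m] [Fintype n]
    (Φ : Matrix m m ℂ →ₗ[ℂ] Matrix n n ℂ) : Matrix (m × n) (m × n) ℂ :=
  ∑ i : m, ∑ j : m,
    Matrix.kroneckerMap (· * ·) (Matrix.single i j 1) (Φ (Matrix.single i j 1))

/-- The block map `x ↦ [[Φ(x), Θ(x)],[Θ(x), Ψ(x)]] : M_m(ℂ) → M₂(M_n(ℂ))`. -/
noncomputable def blockMap {m n : Type*} [Fintype m] [Fintype n]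
    (Φ Θ Ψ : Matrix m m ℂ →ₗ[ℂ] Matrix n n ℂ) :
    Matrix m m ℂ →ₗ[ℂ] Matrix (n ⊕ n) (n ⊕ n) ℂ where
  toFun x := Matrix.fromBlocks (Φ x) (Θ x) (Θ x) (Ψ x)
  map_add' x y := by
    ext (i | i) (j | j) <;> simp [Matrix.fromBlocks]
  map_smul' c x := by
    ext (i | i) (j | j) <;> simp [Matrix.fromBlocks]

/-- `G` is the matrix geometric mean of `A` and `B`: the maximum positive semidefinite
`X` with `[[A, X],[X, B]] ≥ 0`. -/
def IsGeomMean {N : Type*} [Fintype N] (A B G : Matrix N N ℂ) : Prop :=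
  G.PosSemidef ∧ (Matrix.fromBlocks A G G B).PosSemidef ∧
    ∀ X : Matrix N N ℂ, X.PosSemidef → (Matrix.fromBlocks A X X B).PosSemidef →
      (G - X).PosSemidef

/-!
Choi's theorem: the amplification of `Φ` at the rank-one projection onto `∑ᵢ eᵢ ⊗ eᵢ` is a
reindexing of `C_Φ`, so `Φ` CP gives `C_Φ ≥ 0`; conversely a factorization `C_Φ = Bᴴ B` writes
`Φ` as a sum of conjugations `x ↦ Kᴴ x K`, each of which is CP. The Choi matrix of the block map
`[[Φ, Θ], [Θ, Ψ]]` is a reindexing of `[[C_Φ, C_Θ], [C_Θ, C_Ψ]]`, and `Θ ↦ C_Θ` is a linear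
bijection, so the maximality of `G` among CP block maps transfers to `C_G`. Comparing with
`X = 0` shows `C_G ≥ 0`.
-/

open Matrix

theorem Matrix.PosSemidef.fromBlocks_diagonal {𝕜 l o : Type*} [RCLike 𝕜] [Fintype l] [Fintype o]
    {A : Matrix l l 𝕜} {B : Matrix o o 𝕜} (hA : A.PosSemidef) (hB : B.PosSemidef) :
    (fromBlocks A 0 0 B).PosSemidef := by
  classical
  open scoped MatrixOrder in
  obtain ⟨a, rfl⟩ := CStarAlgebra.nonneg_iff_eq_star_mul_self.mp hA.nonneg
  obtain ⟨b, rfl⟩ := CStarAlgebra.nonneg_iff_eq_star_mul_self.mp hB.nonneg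
  simpa [fromBlocks_conjTranspose, fromBlocks_multiply, star_eq_conjTranspose] using
    posSemidef_conjTranspose_mul_self (fromBlocks a 0 0 b)

section Choi

variable {m n : Type*}

/-- `(id ⊗ Φ) M`: `Φ` applied to each block of `M`. -/
def amplify {ι : Type*} (Φ : Matrix m m ℂ →ₗ[ℂ] Matrix n n ℂ) (M : Matrix (ι × m) (ι × m) ℂ) :
    Matrix (ι × n) (ι × n) ℂ :=
  of fun p q => Φ (of fun x y => M (p.1, x) (q.1, y)) p.2 q.2

variable [Fintype m]

noncomputable def ofChoi (X : Matrix (m × n) (m × n) ℂ) : Matrix m m ℂ →ₗ[ℂ] Matrix n n ℂ where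
  toFun x := of fun p q => ∑ i, ∑ j, x i j * X (i, p) (j, q)
  map_add' x y := by
    ext p q
    simp [add_mul, Finset.sum_add_distrib]
  map_smul' c x := by
    ext p q
    simp [Finset.mul_sum, mul_assoc]

theorem ofChoi_apply (X : Matrix (m × n) (m × n) ℂ) (x : Matrix m m ℂ) (p q : n) :
    ofChoi X x p q = ∑ i, ∑ j, x i j * X (i, p) (j, q) := rfl

def conjMap (K : Matrix m n ℂ) : Matrix m m ℂ →ₗ[ℂ] Matrix n n ℂ where
  toFun x := Kᴴ * x * K
  map_add' x y := by rw [Matrix.mul_add, Matrix.add_mul]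
  map_smul' c x := by simp

theorem conjMap_apply (K : Matrix m n ℂ) (x : Matrix m m ℂ) : conjMap K x = Kᴴ * x * K := rfl

theorem amplify_conjMap {ι : Type*} [Fintype ι] [DecidableEq ι] (K : Matrix m n ℂ)
    (M : Matrix (ι × m) (ι × m) ℂ) :
    amplify (conjMap K) M =
      (kronecker (1 : Matrix ι ι ℂ) K)ᴴ * M * kronecker (1 : Matrix ι ι ℂ) K := by
  ext ⟨a, p⟩ ⟨b, q⟩
  simp [amplify, conjMap_apply, Matrix.mul_apply, Fintype.sum_prod_type, one_apply,
    Finset.sum_mul, apply_ite (starRingEnd ℂ), ite_mul]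

theorem ofChoi_conjTranspose_mul_self {ι : Type*} [Fintype ι] (B : Matrix ι (m × n) ℂ) :
    ofChoi (Bᴴ * B) = ∑ r, conjMap (of (Function.curry (B r))) := by
  ext x p q
  simp only [ofChoi_apply, LinearMap.sum_apply, conjMap_apply, Matrix.sum_apply, Matrix.mul_apply,
    conjTranspose_apply, of_apply, Function.curry_apply, Finset.mul_sum, Finset.sum_mul]
  rw [Finset.sum_comm]
  refine (Finset.sum_congr rfl fun j _ => Finset.sum_comm).trans ?_
  rw [Finset.sum_comm]
  exact Finset.sum_congr rfl fun r _ => Finset.sum_congr rfl fun j _ =>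
    Finset.sum_congr rfl fun i _ => by ring

variable [Fintype n]

theorem isCP_iff_amplify (Φ : Matrix m m ℂ →ₗ[ℂ] Matrix n n ℂ) :
    IsCP Φ ↔ ∀ (k : ℕ) (M : Matrix (Fin k × m) (Fin k × m) ℂ), M.PosSemidef →
      (amplify Φ M).PosSemidef := Iff.rfl

theorem IsCP.sum {ι : Type*} (s : Finset ι) {Φ : ι → Matrix m m ℂ →ₗ[ℂ] Matrix n n ℂ}
    (h : ∀ i ∈ s, IsCP (Φ i)) : IsCP (∑ i ∈ s, Φ i) := by
  refine (isCP_iff_amplify _).2 fun k M hM => ?_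
  have : amplify (∑ i ∈ s, Φ i) M = ∑ i ∈ s, amplify (Φ i) M := by
    ext p q
    simp [amplify, Matrix.sum_apply]
  rw [this]
  exact posSemidef_sum s fun i hi => h i hi k M hM

theorem isCP_conjMap (K : Matrix m n ℂ) : IsCP (conjMap K) := by
  refine (isCP_iff_amplify _).2 fun k M hM => ?_
  rw [amplify_conjMap]
  exact hM.conjTranspose_mul_mul_same _

variable [DecidableEq m]

theorem choi_apply (Φ : Matrix m m ℂ →ₗ[ℂ] Matrix n n ℂ) (i j : m) (p q : n) :
    choi Φ (i, p) (j, q) = Φ (single i j 1) p q := by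
  simp [choi, Matrix.sum_apply, single, ite_and]

theorem choi_sub (Φ Ψ : Matrix m m ℂ →ₗ[ℂ] Matrix n n ℂ) :
    choi (Φ - Ψ) = choi Φ - choi Ψ := by
  ext ⟨i, p⟩ ⟨j, q⟩
  simp [choi_apply]

theorem choi_ofChoi (X : Matrix (m × n) (m × n) ℂ) : choi (ofChoi X) = X := by
  ext ⟨i, p⟩ ⟨j, q⟩
  simp [choi_apply, ofChoi_apply, single, ite_and]

theorem ofChoi_choi (Φ : Matrix m m ℂ →ₗ[ℂ] Matrix n n ℂ) : ofChoi (choi Φ) = Φ := by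
  ext x p q
  conv_rhs => rw [matrix_eq_sum_single x]
  simp only [ofChoi_apply, choi_apply, map_sum, Matrix.sum_apply]
  refine Finset.sum_congr rfl fun i _ => Finset.sum_congr rfl fun j _ => ?_
  rw [← smul_eq_mul, ← Matrix.smul_apply, ← map_smul, smul_single, smul_eq_mul, mul_one]

theorem IsCP.posSemidef_choi {Φ : Matrix m m ℂ →ₗ[ℂ] Matrix n n ℂ} (h : IsCP Φ) :
    (choi Φ).PosSemidef := by
  let e : Fin (Fintype.card m) ≃ m := (Fintype.equivFin m).symm
  let w : Fin (Fintype.card m) × m → ℂ := fun p => if p.2 = e p.1 then 1 else 0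
  have hamp : amplify Φ (vecMulVec w (star w))
      = (choi Φ).submatrix (e.prodCongr (Equiv.refl n)) (e.prodCongr (Equiv.refl n)) := by
    ext ⟨a, p⟩ ⟨b, q⟩
    have hblock : (of fun x y => vecMulVec w (star w) (a, x) (b, y)) = single (e a) (e b) 1 := by
      ext x y
      simp only [w, of_apply, vecMulVec_apply, Pi.star_apply, single, eq_comm (a := x),
        eq_comm (a := y)]
      split_ifs <;> simp_all
    simp [amplify, hblock, choi_apply]
  rw [← posSemidef_submatrix_equiv (e.prodCongr (Equiv.refl n)), ← hamp]
  exact h _ _ (posSemidef_vecMulVec_self_star w)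

theorem IsCP.of_posSemidef_choi {Φ : Matrix m m ℂ →ₗ[ℂ] Matrix n n ℂ}
    (h : (choi Φ).PosSemidef) : IsCP Φ := by
  classical
  open scoped MatrixOrder in
  obtain ⟨B, hB⟩ := CStarAlgebra.nonneg_iff_eq_star_mul_self.mp h.nonneg
  rw [← ofChoi_choi Φ, hB, star_eq_conjTranspose, ofChoi_conjTranspose_mul_self]
  exact IsCP.sum _ fun r _ => isCP_conjMap _

theorem isCP_iff_posSemidef_choi (Φ : Matrix m m ℂ →ₗ[ℂ] Matrix n n ℂ) :
    IsCP Φ ↔ (choi Φ).PosSemidef :=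
  ⟨IsCP.posSemidef_choi, IsCP.of_posSemidef_choi⟩

theorem choi_blockMap (Φ Θ Ψ : Matrix m m ℂ →ₗ[ℂ] Matrix n n ℂ) :
    (choi (blockMap Φ Θ Ψ)).submatrix (Equiv.prodSumDistrib m n n).symm
        (Equiv.prodSumDistrib m n n).symm =
      fromBlocks (choi Φ) (choi Θ) (choi Θ) (choi Ψ) := by
  ext (⟨i, p⟩ | ⟨i, p⟩) (⟨j, q⟩ | ⟨j, q⟩) <;> simp [choi_apply, blockMap]

theorem isCP_blockMap_iff (Φ Θ Ψ : Matrix m m ℂ →ₗ[ℂ] Matrix n n ℂ) :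
    IsCP (blockMap Φ Θ Ψ) ↔ (fromBlocks (choi Φ) (choi Θ) (choi Θ) (choi Ψ)).PosSemidef := by
  rw [← choi_blockMap, posSemidef_submatrix_equiv, isCP_iff_posSemidef_choi]

end Choi

theorem choi_of_geom_mean_general {m n : Type*} [Fintype m] [DecidableEq m] [Fintype n]
    (Φ Ψ : Matrix m m ℂ →ₗ[ℂ] Matrix n n ℂ) (hΦ : IsCP Φ) (hΨ : IsCP Ψ)
    (G : Matrix m m ℂ →ₗ[ℂ] Matrix n n ℂ)
    (hGmem : IsCP (blockMap Φ G Ψ))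
    (hGmax : ∀ Θ : Matrix m m ℂ →ₗ[ℂ] Matrix n n ℂ, IsCP (blockMap Φ Θ Ψ) → IsCP (G - Θ)) :
    (∀ Θ : Matrix m m ℂ →ₗ[ℂ] Matrix n n ℂ,
      IsCP (blockMap Φ Θ Ψ) ↔
        (Matrix.fromBlocks (choi Φ) (choi Θ) (choi Θ) (choi Ψ)).PosSemidef) ∧
      IsGeomMean (choi Φ) (choi Ψ) (choi G) := by
  have hmax : ∀ X : Matrix (m × n) (m × n) ℂ,
      (fromBlocks (choi Φ) X X (choi Ψ)).PosSemidef → (choi G - X).PosSemidef := by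
    intro X hX
    rw [← choi_ofChoi X] at hX ⊢
    rw [← choi_sub, ← isCP_iff_posSemidef_choi]
    exact hGmax _ ((isCP_blockMap_iff _ _ _).2 hX)
  refine ⟨fun Θ => isCP_blockMap_iff Φ Θ Ψ, ?_, (isCP_blockMap_iff _ _ _).1 hGmem,
    fun X _ => hmax X⟩
  simpa using hmax 0 (hΦ.posSemidef_choi.fromBlocks_diagonal hΨ.posSemidef_choi)

/-- for CP maps `Φ, Ψ : M_m(ℂ) → M_n(ℂ)`, a linear map `Θ` makes the block map
`x ↦ [[Φ(x), Θ(x)],[Θ(x), Ψ(x)]]` completely positive iff the block matrix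
`[[C_Φ, C_Θ],[C_Θ, C_Ψ]]` of Choi matrices is positive semidefinite; consequently the Choi
matrix of the geometric mean `Φ # Ψ` (the maximal such `Θ` in the CP order) is the matrix
geometric mean `C_Φ # C_Ψ`. -/
theorem choi_of_geom_mean {m n : Type*} [Fintype m] [DecidableEq m] [Fintype n] [DecidableEq n]
    (Φ Ψ : Matrix m m ℂ →ₗ[ℂ] Matrix n n ℂ) (hΦ : IsCP Φ) (hΨ : IsCP Ψ)
    (G : Matrix m m ℂ →ₗ[ℂ] Matrix n n ℂ)
    (hGmem : IsCP (blockMap Φ G Ψ))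
    (hGmax : ∀ Θ : Matrix m m ℂ →ₗ[ℂ] Matrix n n ℂ, IsCP (blockMap Φ Θ Ψ) → IsCP (G - Θ)) :
    (∀ Θ : Matrix m m ℂ →ₗ[ℂ] Matrix n n ℂ,
      IsCP (blockMap Φ Θ Ψ) ↔
        (Matrix.fromBlocks (choi Φ) (choi Θ) (choi Θ) (choi Ψ)).PosSemidef) ∧
      IsGeomMean (choi Φ) (choi Ψ) (choi G) :=
  choi_of_geom_mean_general Φ Ψ hΦ hΨ G hGmem hGmax
end

section
/- Let φ, ψ be positive linear functionals on Mₙ(ℂ), given by φ(x) = Tr(ρx) and ψ(x) = Tr(σx) with ρ, σ positive semidefinite. Viewing φ, ψ as CP maps Mₙ(ℂ) → ℂ, their Choi matrices are ρᵀ and σᵀ respectively, and the geometric mean satisfies (φ # ψ)(x) = Tr((ρ # σ)x), i.e. the density matrix of the geometric mean of the functionals is the matrix geometric mean of the density matrices. -/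
/-!
Both Choi matrices are transposes, `C_φ = ρᵀ` and `C_ψ = σᵀ`, because `Tr(ρ e_{ij}) = ρ_{ji}`.
Transposition preserves positive semidefiniteness and commutes with forming block matrices, so it
maps the set of `X ≥ 0` with `[[A, X], [X, B]] ≥ 0` onto the corresponding set for `Aᵀ, Bᵀ` and
carries its maximum to the maximum: `Aᵀ # Bᵀ = (A # B)ᵀ`. The maximum is unique by antisymmetry
of the Loewner order.
-/

open scoped ComplexOrder

open scoped MatrixOrder
open Matrix

lemma Matrix.of_trace_mul_single_one_eq_transpose {N R : Type*} [Fintype N] [DecidableEq N]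
    [Semiring R] (τ : Matrix N N R) :
    (of fun i j => (τ * single i j (1 : R)).trace) = τᵀ := by
  ext i j
  simp [trace_mul_single]

lemma Matrix.PosSemidef.fromBlocks_transpose {m n R : Type*} [CommRing R] [PartialOrder R]
    [StarRing R] {A : Matrix m m R} {B : Matrix n n R} {X : Matrix m n R} {Y : Matrix n m R}
    (h : (fromBlocks A X Y B).PosSemidef) : (fromBlocks Aᵀ Yᵀ Xᵀ Bᵀ).PosSemidef := by
  simpa only [Matrix.fromBlocks_transpose] using h.transpose

section

variable {N : Type*} [Fintype N]

lemma IsGeomMean.transpose {A B G : Matrix N N ℂ} (h : IsGeomMean A B G) :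
    IsGeomMean Aᵀ Bᵀ Gᵀ := by
  obtain ⟨hG, hblock, hmax⟩ := h
  refine ⟨hG.transpose, hblock.fromBlocks_transpose, fun X hX hXblock => ?_⟩
  have hGX : (G - Xᵀ).PosSemidef := by
    refine hmax Xᵀ hX.transpose ?_
    simpa only [transpose_transpose] using hXblock.fromBlocks_transpose
  simpa only [transpose_sub, transpose_transpose] using hGX.transpose

lemma IsGeomMean.unique {A B G G' : Matrix N N ℂ} (h : IsGeomMean A B G)
    (h' : IsGeomMean A B G') : G = G' :=
  le_antisymm (h'.2.2 G h.1 h.2.1) (h.2.2 G' h'.1 h'.2.1)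

end

theorem geom_mean_of_positive_functionals_general {n : Type*} [Fintype n] [DecidableEq n]
    (ρ σ : Matrix n n ℂ)
    (Cφ Cψ : Matrix n n ℂ)
    (hCφ : Cφ = Matrix.of fun i j => (ρ * Matrix.single i j (1 : ℂ)).trace)
    (hCψ : Cψ = Matrix.of fun i j => (σ * Matrix.single i j (1 : ℂ)).trace)
    (G Gc : Matrix n n ℂ) (hG : IsGeomMean ρ σ G) (hGc : IsGeomMean Cφ Cψ Gc) :
    Cφ = ρ.transpose ∧ Cψ = σ.transpose ∧ Gc = G.transpose ∧
      ∀ x : Matrix n n ℂ, (Gc.transpose * x).trace = (G * x).trace := by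
  have hCφ_eq : Cφ = ρᵀ := hCφ.trans (of_trace_mul_single_one_eq_transpose ρ)
  have hCψ_eq : Cψ = σᵀ := hCψ.trans (of_trace_mul_single_one_eq_transpose σ)
  have hGc_eq : Gc = Gᵀ := hGc.unique (hCφ_eq ▸ hCψ_eq ▸ hG.transpose)
  exact ⟨hCφ_eq, hCψ_eq, hGc_eq, fun x => by rw [hGc_eq, transpose_transpose]⟩

/-- for positive functionals `φ(x) = Tr(ρx)`, `ψ(x) = Tr(σx)` on `M_n(ℂ)`,
the Choi matrices `C_φ(i,j) = φ(e_{ij})` and `C_ψ` equal `ρᵀ` and `σᵀ`, the geometric mean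
of the Choi matrices is `(ρ # σ)ᵀ`, and the geometric mean functional satisfies
`(φ # ψ)(x) = Tr((ρ # σ) x)`. -/
theorem geom_mean_of_positive_functionals {n : Type*} [Fintype n] [DecidableEq n]
    (ρ σ : Matrix n n ℂ) (hρ : ρ.PosSemidef) (hσ : σ.PosSemidef)
    (Cφ Cψ : Matrix n n ℂ)
    (hCφ : Cφ = Matrix.of fun i j => (ρ * Matrix.single i j (1 : ℂ)).trace)
    (hCψ : Cψ = Matrix.of fun i j => (σ * Matrix.single i j (1 : ℂ)).trace)
    (G Gc : Matrix n n ℂ) (hG : IsGeomMean ρ σ G) (hGc : IsGeomMean Cφ Cψ Gc) :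
    Cφ = ρ.transpose ∧ Cψ = σ.transpose ∧ Gc = G.transpose ∧
      ∀ x : Matrix n n ℂ, (Gc.transpose * x).trace = (G * x).trace :=
  geom_mean_of_positive_functionals_general ρ σ Cφ Cψ hCφ hCψ G Gc hG hGc
end

section
/- For an isometry V : H → K and positive operators A, B on H, the geometric mean satisfies (VAV*) # (VBV*) = V(A # B)V*. -/
/-- Positivity of the block operator `[[A, X],[X, B]]` on `H ⊕ H`, expressed via its
quadratic form. -/
def BlockPos {H : Type*} [NormedAddCommGroup H] [InnerProductSpace ℂ H]
    (A X B : H →L[ℂ] H) : Prop :=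
  ∀ ξ η : H,
    0 ≤ ((inner ℂ (A ξ) ξ : ℂ) + (inner ℂ (X η) ξ : ℂ) + (inner ℂ (X ξ) η : ℂ) +
      (inner ℂ (B η) η : ℂ)).re

/-- `G` is the operator geometric mean of positive operators `A` and `B`: the maximum
positive `X` with the block operator `[[A, X],[X, B]]` positive on `H ⊕ H`. -/
def IsOpGeomMean {H : Type*} [NormedAddCommGroup H] [InnerProductSpace ℂ H]
    [CompleteSpace H] (A B G : H →L[ℂ] H) : Prop :=
  G.IsPositive ∧ BlockPos A G B ∧
    ∀ X : H →L[ℂ] H, X.IsPositive → BlockPos A X B → (G - X).IsPositive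

/-!
A block-positive `X` vanishes wherever the corner `A` does: testing the block form against
`(t • ξ, -X ξ)` gives `2 t ‖X ξ‖² ≤ ⟪B X ξ, X ξ⟫` for every real `t`. Hence every competitor `X`
for `(V A V*) # (V B V*)` lives on the range of `V`, i.e. `X = V (V* X V) V*`, and compressing by
`V*` turns it into a competitor for `A # B`. So `X ≤ V (A # B) V*`, while `V (A # B) V*` is itself
a competitor; a maximum is unique.
-/

open ContinuousLinearMap

section

variable {H K : Type*} [NormedAddCommGroup H] [InnerProductSpace ℂ H]
  [NormedAddCommGroup K] [InnerProductSpace ℂ K]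

namespace BlockPos

theorem conj [CompleteSpace H] [CompleteSpace K] {A X B : H →L[ℂ] H} (h : BlockPos A X B)
    (W : H →L[ℂ] K) :
    BlockPos (W ∘L A ∘L adjoint W) (W ∘L X ∘L adjoint W) (W ∘L B ∘L adjoint W) := by
  intro ξ η
  simpa only [comp_apply, ← adjoint_inner_right] using h (adjoint W ξ) (adjoint W η)

theorem apply_eq_zero_of_left_apply_eq_zero [CompleteSpace H] {A X B : H →L[ℂ] H}
    (h : BlockPos A X B) (hX : IsSelfAdjoint X) {ξ : H} (hξ : A ξ = 0) : X ξ = 0 := by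
  set c := (inner ℂ (B (X ξ)) (X ξ)).re
  have hsymm : ∀ x y, inner ℂ (X x) y = inner ℂ x (X y) := hX.isSymmetric
  have hbound : ∀ t : ℝ, 2 * ‖X ξ‖ ^ 2 * t ≤ c := by
    intro t
    have := h ((t : ℂ) • ξ) (-X ξ)
    rw [map_smul, hξ, smul_zero, inner_zero_left, zero_add, map_neg, map_smul, inner_neg_left,
      inner_smul_right, hsymm, inner_neg_right, inner_smul_left, map_neg, inner_neg_left,
      inner_neg_right, neg_neg, inner_self_eq_norm_sq_to_K] at this
    simp only [Complex.coe_algebraMap, Complex.conj_ofReal, ← Complex.ofReal_pow,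
      ← Complex.ofReal_mul, Complex.add_re, Complex.neg_re, Complex.ofReal_re] at this
    linarith
  have hnorm : ‖X ξ‖ ^ 2 ≤ 0 := by
    by_contra! hpos
    linarith [hbound ((c + 1) / (2 * ‖X ξ‖ ^ 2)),
      mul_div_cancel₀ (c + 1) (mul_pos two_pos hpos).ne']
  simpa using hnorm

end BlockPos

namespace ContinuousLinearMap

variable [CompleteSpace H] [CompleteSpace K] {V : H →L[ℂ] K}

theorem adjoint_conj_conj_adjoint_eq_self (hV : adjoint V ∘L V = ContinuousLinearMap.id ℂ H)
    (T : H →L[ℂ] H) : adjoint V ∘L (V ∘L T ∘L adjoint V) ∘L V = T := by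
  calc adjoint V ∘L (V ∘L T ∘L adjoint V) ∘L V
      = (adjoint V ∘L V) ∘L T ∘L (adjoint V ∘L V) := by simp only [comp_assoc]
    _ = T := by rw [hV, id_comp, comp_id]

theorem conj_adjoint_adjoint_conj_eq_self (hV : adjoint V ∘L V = ContinuousLinearMap.id ℂ H)
    {X : K →L[ℂ] K} (hX : IsSelfAdjoint X) (hker : ∀ ξ, adjoint V ξ = 0 → X ξ = 0) :
    V ∘L (adjoint V ∘L X ∘L V) ∘L adjoint V = X := by
  have hright : X ∘L (V ∘L adjoint V) = X := by
    ext k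
    have hVV : adjoint V (V (adjoint V k)) = adjoint V k := by simpa using congr($hV (adjoint V k))
    have := hker (k - V (adjoint V k)) (by rw [map_sub, hVV, sub_self])
    rw [map_sub, sub_eq_zero] at this
    exact this.symm
  have hleft : (V ∘L adjoint V) ∘L X = X := by
    simpa only [adjoint_comp, adjoint_adjoint, hX.adjoint_eq, comp_assoc]
      using congrArg adjoint hright
  calc V ∘L (adjoint V ∘L X ∘L V) ∘L adjoint V
      = (V ∘L adjoint V) ∘L X ∘L (V ∘L adjoint V) := by simp only [comp_assoc]
    _ = X := by rw [hright, hleft]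

end ContinuousLinearMap

namespace IsOpGeomMean

variable [CompleteSpace H]

theorem unique {A B G G' : H →L[ℂ] H} (hG : IsOpGeomMean A B G)
    (hG' : IsOpGeomMean A B G') : G = G' :=
  le_antisymm (hG'.2.2 G hG.1 hG.2.1) (hG.2.2 G' hG'.1 hG'.2.1)

theorem isometry_conj [CompleteSpace K] {V : H →L[ℂ] K}
    (hV : adjoint V ∘L V = ContinuousLinearMap.id ℂ H) {A B G : H →L[ℂ] H}
    (hG : IsOpGeomMean A B G) :
    IsOpGeomMean (V ∘L A ∘L adjoint V) (V ∘L B ∘L adjoint V) (V ∘L G ∘L adjoint V) := by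
  obtain ⟨hGpos, hGblock, hGmax⟩ := hG
  refine ⟨hGpos.conj_adjoint V, hGblock.conj V, fun X hXpos hXblock => ?_⟩
  have hsupp : V ∘L (adjoint V ∘L X ∘L V) ∘L adjoint V = X :=
    conj_adjoint_adjoint_conj_eq_self hV hXpos.isSelfAdjoint fun ξ hξ =>
      hXblock.apply_eq_zero_of_left_apply_eq_zero hXpos.isSelfAdjoint (by simp [hξ])
  have hcompress : BlockPos A (adjoint V ∘L X ∘L V) B := by
    simpa only [adjoint_adjoint, adjoint_conj_conj_adjoint_eq_self hV]
      using hXblock.conj (adjoint V)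
  have hle := (hGmax _ (hXpos.adjoint_conj V) hcompress).conj_adjoint V
  rwa [sub_comp, comp_sub, hsupp] at hle

end IsOpGeomMean

end

theorem geom_mean_isometry_conj_general {H K : Type*}
    [NormedAddCommGroup H] [InnerProductSpace ℂ H] [CompleteSpace H]
    [NormedAddCommGroup K] [InnerProductSpace ℂ K] [CompleteSpace K]
    (V : H →L[ℂ] K)
    (hV : (ContinuousLinearMap.adjoint V).comp V = ContinuousLinearMap.id ℂ H)
    (A B G : H →L[ℂ] H)
    (hG : IsOpGeomMean A B G)
    (G' : K →L[ℂ] K)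
    (hG' : IsOpGeomMean (V.comp (A.comp (ContinuousLinearMap.adjoint V)))
      (V.comp (B.comp (ContinuousLinearMap.adjoint V))) G') :
    G' = V.comp (G.comp (ContinuousLinearMap.adjoint V)) :=
  hG'.unique (hG.isometry_conj hV)

/-- for an isometry `V : H → K` (`V*V = I`) and positive operators `A, B`
on `H`, the geometric mean satisfies `(VAV*) # (VBV*) = V (A # B) V*`. -/
theorem geom_mean_isometry_conj {H K : Type*}
    [NormedAddCommGroup H] [InnerProductSpace ℂ H] [CompleteSpace H]
    [NormedAddCommGroup K] [InnerProductSpace ℂ K] [CompleteSpace K]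
    (V : H →L[ℂ] K)
    (hV : (ContinuousLinearMap.adjoint V).comp V = ContinuousLinearMap.id ℂ H)
    (A B G : H →L[ℂ] H) (hA : A.IsPositive) (hB : B.IsPositive)
    (hG : IsOpGeomMean A B G)
    (G' : K →L[ℂ] K)
    (hG' : IsOpGeomMean (V.comp (A.comp (ContinuousLinearMap.adjoint V)))
      (V.comp (B.comp (ContinuousLinearMap.adjoint V))) G') :
    G' = V.comp (G.comp (ContinuousLinearMap.adjoint V)) :=
  geom_mean_isometry_conj_general V hV A B G hG G' hG'
end
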